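/- The bracket on H is alternating ([u,u] = 0 for all u ∈ H) and satisfies the Jacobi identity [[u,v],w] + [[v,w],u] + [[w,u],v] = 0 for all u, v, w ∈ H. Consequently H(2;(n1,n2);Φ(1)) is a Lie algebra over F of dimension p^(n1+n2). -/

import Mathlib

open scoped BigOperators

/-- Binomial coefficient of integers, zero unless `0 ≤ b ≤ a`. -/
def intChoose (a b : ℤ) : ℤ :=
  if 0 ≤ b ∧ b ≤ a then (a.toNat.choose b.toNat : ℤ) else 0

/-- The structure constant `N(i,j,k,l)`. -/
def Ncoef (i j k l : ℤ) : ℤ :=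
  intChoose (i + k - 1) i * intChoose (j + l - 1) (j - 1) -
    intChoose (i + k - 1) (i - 1) * intChoose (j + l - 1) j

variable (F : Type*) [Field F]

/-- The underlying space of `H(2;(n1,n2);Φ(1))`, with basis indexed by `Fin r × Fin q`. -/
abbrev Hsp (r q : ℕ) : Type _ := Fin r × Fin q → F

/-- The divided power monomial `x^(i) y^(j)`, read as `0` when out of range. -/
noncomputable def mm (r q : ℕ) (i j : ℤ) : Hsp F r q :=
  if h : 0 ≤ i ∧ i < (r : ℤ) ∧ 0 ≤ j ∧ j < (q : ℤ) then
    Pi.single (⟨i.toNat, by omega⟩, ⟨j.toNat, by omega⟩) 1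
  else 0

/-- The bracket on basis elements of `H(2;(n1,n2);Φ(1))`. -/
noncomputable def bB (r q : ℕ) (a b : Fin r × Fin q) : Hsp F r q :=
  if 0 < (a.1 : ℤ) + (b.1 : ℤ) then
    ((Ncoef (a.1 : ℤ) (a.2 : ℤ) (b.1 : ℤ) (b.2 : ℤ) : ℤ) : F) •
      mm F r q ((a.1 : ℤ) + (b.1 : ℤ) - 1) ((a.2 : ℤ) + (b.2 : ℤ) - 1)
  else
    ((intChoose ((a.2 : ℤ) + (b.2 : ℤ) - 1) (b.2 : ℤ) -
        intChoose ((a.2 : ℤ) + (b.2 : ℤ) - 1) (a.2 : ℤ) : ℤ) : F) •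
      mm F r q ((r : ℤ) - 1) ((a.2 : ℤ) + (b.2 : ℤ) - 1)

/-- The bilinear bracket of `H(2;(n1,n2);Φ(1))`, extending `bB` bilinearly. -/
noncomputable def br (r q : ℕ) (u v : Hsp F r q) : Hsp F r q :=
  ∑ a : Fin r × Fin q, ∑ b : Fin r × Fin q, (u a * v b) • bB F r q a b

/-! The bracket is the Poisson-type bracket `[u, v] = D u · T v - T u · D v` on the truncated
divided power algebra `O(2;(n1,n2))`, where `D = ∂_y` and `T` is `∂_x` twisted to send
`y^(j)` to `x^(r-1) y^(j)`. Since `C(p^n, a) = 0` in `F` for `0 < a < p^n`, `D` is a derivation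
and `T` is a derivation up to the defect `-z · P a · P b`, with `z = x^(r-1)` and `P` the
projection onto `x`-degree zero; `D` and `T` commute. The Jacobi identity then becomes an identity
in a commutative ring, in which the defect terms cancel cyclically because `z · a = z · P a`. -/

lemma intChoose_of_neg_right {a b : ℤ} (h : b < 0) : intChoose a b = 0 := if_neg (by omega)

lemma intChoose_of_lt {a b : ℤ} (h : a < b) : intChoose a b = 0 := if_neg (by omega)

@[simp]
lemma intChoose_natCast (a b : ℕ) : intChoose a b = a.choose b := by
  unfold intChoose
  split_ifs with h
  · simp
  · rw [Nat.choose_eq_zero_of_lt (by omega), Nat.cast_zero]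

lemma intChoose_zero_right {a : ℤ} (ha : 0 ≤ a) : intChoose a 0 = 1 := by
  lift a to ℕ using ha
  simpa using intChoose_natCast a 0

lemma intChoose_self {a : ℤ} (ha : 0 ≤ a) : intChoose a a = 1 := by
  lift a to ℕ using ha
  simp

lemma intChoose_sub (a b : ℤ) : intChoose a (a - b) = intChoose a b := by
  by_cases h : 0 ≤ b ∧ b ≤ a
  · obtain ⟨b, rfl⟩ := Int.eq_ofNat_of_zero_le h.1
    obtain ⟨c, hc⟩ := Int.eq_ofNat_of_zero_le (sub_nonneg.mpr h.2)
    obtain rfl : a = b + c := by omega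
    rw [show (b : ℤ) + c - b = c by ring, show (b : ℤ) + c = (b + c : ℕ) by push_cast; ring,
      intChoose_natCast, intChoose_natCast, Nat.choose_symm_add]
  · rcases not_and_or.mp h with h | h
    · rw [intChoose_of_lt (by omega), intChoose_of_neg_right (by omega)]
    · rw [intChoose_of_neg_right (by omega), intChoose_of_lt (by omega)]

lemma intChoose_add_comm (a b : ℤ) : intChoose (a + b) a = intChoose (b + a) b := by
  rw [← intChoose_sub, add_comm, add_sub_cancel_right]

lemma intChoose_eq_add_of_ne_zero {a : ℤ} (b : ℤ) (ha : a ≠ 0) :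
    intChoose a b = intChoose (a - 1) (b - 1) + intChoose (a - 1) b := by
  by_cases h : 0 < b ∧ b ≤ a
  · obtain ⟨m, rfl⟩ : ∃ m : ℕ, a = m + 1 := ⟨(a - 1).toNat, by omega⟩
    obtain ⟨k, rfl⟩ : ∃ k : ℕ, b = k + 1 := ⟨(b - 1).toNat, by omega⟩
    rw [add_sub_cancel_right, add_sub_cancel_right, ← Nat.cast_succ, ← Nat.cast_succ]
    simp only [intChoose_natCast, Nat.choose_succ_succ, Nat.cast_add]
  · rcases (show b < 0 ∨ b = 0 ∨ a < b by omega) with hb | rfl | hab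
    · simp [intChoose_of_neg_right, hb, (by omega : b - 1 < 0)]
    · by_cases ha' : 0 < a
      · rw [intChoose_zero_right ha'.le, intChoose_of_neg_right (by omega),
          intChoose_zero_right (by omega), zero_add]
      · rw [intChoose_of_lt (by omega), intChoose_of_neg_right (by omega),
          intChoose_of_lt (by omega), zero_add]
    · simp [intChoose_of_lt, hab, (by omega : a - 1 < b - 1), (by omega : a - 1 < b)]

lemma intChoose_mul_intChoose (a b c : ℤ) :
    intChoose (a + b) a * intChoose (a + b + c) (a + b)
      = intChoose (b + c) b * intChoose (a + b + c) a := by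
  rcases (show a < 0 ∨ b < 0 ∨ c < 0 ∨ (0 ≤ a ∧ 0 ≤ b ∧ 0 ≤ c) by omega)
    with h | h | h | ⟨ha, hb, hc⟩
  · simp [intChoose_of_neg_right h]
  · simp [intChoose_of_neg_right h, intChoose_of_lt (by omega : a + b < a)]
  · simp [intChoose_of_lt (by omega : b + c < b), intChoose_of_lt (by omega : a + b + c < a + b)]
  · lift a to ℕ using ha
    lift b to ℕ using hb
    lift c to ℕ using hc
    have h := Nat.choose_mul (n := a + b + c) (k := a + b) (s := a) (by omega)
    rw [show a + b + c - a = b + c by omega, show a + b - a = b by omega] at h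
    simp only [← Nat.cast_add, intChoose_natCast, ← Nat.cast_mul]
    rw [mul_comm, h, mul_comm]

def ChooseVanishes (R : Type*) [Semiring R] (n : ℕ) : Prop :=
  ∀ a : ℕ, 0 < a → a < n → (n.choose a : R) = 0

lemma chooseVanishes_prime_pow {R : Type*} [Semiring R] {p : ℕ} [CharP R p] (hp : p.Prime)
    (k : ℕ) : ChooseVanishes R (p ^ k) := fun _ h0 h1 =>
  (CharP.cast_eq_zero_iff R p _).mpr (hp.dvd_choose_pow h0.ne' h1.ne)

lemma ChooseVanishes.intChoose_eq_zero {R : Type*} [Ring R] {n : ℕ} (h : ChooseVanishes R n)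
    {a : ℤ} (h0 : 0 < a) (h1 : a < n) : ((intChoose n a : ℤ) : R) = 0 := by
  lift a to ℕ using h0.le
  rw [intChoose_natCast, Int.cast_natCast]
  exact h a (by omega) (by omega)

def poissonBracket {A : Type*} [CommRing A] (D T : A → A) (u v : A) : A :=
  D u * T v - T u * D v

theorem poissonBracket_jacobi {A : Type*} [CommRing A] (D T : A →+ A) (P : A → A) (z : A)
    (hD : ∀ a b, D (a * b) = D a * b + a * D b)
    (hT : ∀ a b, T (a * b) = T a * b + a * T b - z * (P a * P b))
    (hDT : ∀ a, D (T a) = T (D a)) (hP : ∀ a b, P (a * b) = P a * P b)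
    (hz : ∀ a, z * a = z * P a) (hPD : ∀ a, P (D a) = D (P a)) (hPP : ∀ a, P (P a) = P a)
    (u v w : A) :
    poissonBracket D T (poissonBracket D T u v) w + poissonBracket D T (poissonBracket D T v w) u
      + poissonBracket D T (poissonBracket D T w u) v = 0 := by
  have hzD : ∀ a c, z * a * D c = z * (P a * D (P c)) := fun a c => by
    rw [mul_assoc, hz (a * D c), hP, hPD]
  simp only [poissonBracket, map_sub, hD, hT, hDT, hPD]
  simp only [sub_mul, add_mul]
  simp only [hzD, hP, hPD, hPP]
  ring

namespace AlbertZassenhaus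

variable {F} {r q : ℕ}

lemma mm_eq_zero_of_not {i j : ℤ} (h : ¬(0 ≤ i ∧ i < r ∧ 0 ≤ j ∧ j < q)) : mm F r q i j = 0 :=
  dif_neg h

lemma mm_coe (a : Fin r × Fin q) : mm F r q a.1 a.2 = Pi.basisFun F _ a := by
  rw [mm, dif_pos (by omega), Pi.basisFun_apply]
  simp

lemma exists_coe_eq {i j : ℤ} (h : 0 ≤ i ∧ i < r ∧ 0 ≤ j ∧ j < q) :
    ∃ a : Fin r × Fin q, (a.1 : ℤ) = i ∧ (a.2 : ℤ) = j :=
  ⟨(⟨i.toNat, by omega⟩, ⟨j.toNat, by omega⟩), by simp [h.1], by simp [h.2.2.1]⟩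

lemma constr_mm {M : Type*} [AddCommMonoid M] [Module F M] (f : Fin r × Fin q → M)
    (a : Fin r × Fin q) : (Pi.basisFun F _).constr F f (mm F r q a.1 a.2) = f a := by
  rw [mm_coe, Module.Basis.constr_basis]

lemma ext_mm {M : Type*} [AddCommMonoid M] [Module F M] {f g : Hsp F r q →ₗ[F] M}
    (h : ∀ a : Fin r × Fin q, f (mm F r q a.1 a.2) = g (mm F r q a.1 a.2)) : f = g :=
  (Pi.basisFun F _).ext fun a => by simpa only [mm_coe] using h a

lemma ext_mm₂ {M : Type*} [AddCommMonoid M] [Module F M]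
    {f g : Hsp F r q →ₗ[F] Hsp F r q →ₗ[F] M}
    (h : ∀ a b : Fin r × Fin q, f (mm F r q a.1 a.2) (mm F r q b.1 b.2)
      = g (mm F r q a.1 a.2) (mm F r q b.1 b.2)) : f = g :=
  LinearMap.ext_basis (Pi.basisFun F _) (Pi.basisFun F _) fun a b => by
    simpa only [mm_coe] using h a b

noncomputable def divPowMul : Hsp F r q →ₗ[F] Hsp F r q →ₗ[F] Hsp F r q :=
  (Pi.basisFun F _).constr F fun a => (Pi.basisFun F _).constr F fun b =>
    ((intChoose (a.1 + b.1 : ℤ) a.1 * intChoose (a.2 + b.2 : ℤ) a.2 : ℤ) : F) •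
      mm F r q (a.1 + b.1) (a.2 + b.2)

noncomputable def derivY : Hsp F r q →ₗ[F] Hsp F r q :=
  (Pi.basisFun F _).constr F fun a => mm F r q a.1 (a.2 - 1)

noncomputable def twistedDerivX : Hsp F r q →ₗ[F] Hsp F r q :=
  (Pi.basisFun F _).constr F fun a =>
    if (a.1 : ℕ) = 0 then mm F r q (r - 1) a.2 else mm F r q (a.1 - 1) a.2

noncomputable def projXZero : Hsp F r q →ₗ[F] Hsp F r q :=
  (Pi.basisFun F _).constr F fun a => if (a.1 : ℕ) = 0 then mm F r q 0 a.2 else 0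

noncomputable def xTop : Hsp F r q := mm F r q (r - 1) 0

lemma binomial_smul_mm_eq_zero {i j : ℤ} (k l : ℤ) (h : ¬(0 ≤ i ∧ i < r ∧ 0 ≤ j ∧ j < q)) :
    ((intChoose (i + k) i * intChoose (j + l) j : ℤ) : F) • mm F r q (i + k) (j + l) = 0 := by
  rcases (show i < 0 ∨ j < 0 ∨ k < 0 ∨ l < 0 ∨ (0 ≤ k ∧ 0 ≤ l ∧ (r ≤ i ∨ q ≤ j)) by omega)
    with h | h | h | h | h
  · simp [intChoose_of_neg_right h]
  · simp [intChoose_of_neg_right h]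
  · simp [intChoose_of_lt (by omega : i + k < i)]
  · simp [intChoose_of_lt (by omega : j + l < j)]
  · rw [mm_eq_zero_of_not (by omega), smul_zero]

lemma divPowMul_mm (i j k l : ℤ) :
    divPowMul (mm F r q i j) (mm F r q k l)
      = ((intChoose (i + k) i * intChoose (j + l) j : ℤ) : F) • mm F r q (i + k) (j + l) := by
  by_cases hij : 0 ≤ i ∧ i < r ∧ 0 ≤ j ∧ j < q
  · by_cases hkl : 0 ≤ k ∧ k < r ∧ 0 ≤ l ∧ l < q
    · obtain ⟨a, rfl, rfl⟩ := exists_coe_eq hij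
      obtain ⟨b, rfl, rfl⟩ := exists_coe_eq hkl
      rw [divPowMul, constr_mm, constr_mm]
    · rw [mm_eq_zero_of_not hkl, map_zero, intChoose_add_comm i, intChoose_add_comm j, add_comm i,
        add_comm j, binomial_smul_mm_eq_zero i j hkl]
  · rw [mm_eq_zero_of_not hij, map_zero, LinearMap.zero_apply, binomial_smul_mm_eq_zero k l hij]

lemma derivY_mm {i j : ℤ} (hj : j < q) : derivY (mm F r q i j) = mm F r q i (j - 1) := by
  by_cases h : 0 ≤ i ∧ i < r ∧ 0 ≤ j
  · obtain ⟨a, rfl, rfl⟩ := exists_coe_eq ⟨h.1, h.2.1, h.2.2, hj⟩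
    exact constr_mm _ a
  · rw [mm_eq_zero_of_not (by omega), map_zero, mm_eq_zero_of_not (by omega)]

lemma twistedDerivX_mm_zero (j : ℤ) : twistedDerivX (mm F r q 0 j) = mm F r q (r - 1) j := by
  by_cases h : 0 < r ∧ 0 ≤ j ∧ j < q
  · obtain ⟨a, ha, rfl⟩ := exists_coe_eq (r := r) ⟨le_rfl, by omega, h.2⟩
    rw [← ha, twistedDerivX, constr_mm, if_pos (by omega)]
  · rw [mm_eq_zero_of_not (by omega), map_zero, mm_eq_zero_of_not (by omega)]

lemma twistedDerivX_mm_of_ne_zero {i : ℤ} (j : ℤ) (hi : i ≠ 0) (hir : i < r) :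
    twistedDerivX (mm F r q i j) = mm F r q (i - 1) j := by
  by_cases h : 0 ≤ i ∧ 0 ≤ j ∧ j < q
  · obtain ⟨a, rfl, rfl⟩ := exists_coe_eq ⟨h.1, hir, h.2⟩
    rw [twistedDerivX, constr_mm, if_neg (by omega)]
  · rw [mm_eq_zero_of_not (by omega), map_zero, mm_eq_zero_of_not (by omega)]

lemma projXZero_mm_zero (j : ℤ) : projXZero (mm F r q 0 j) = mm F r q 0 j := by
  by_cases h : 0 < r ∧ 0 ≤ j ∧ j < q
  · obtain ⟨a, ha, rfl⟩ := exists_coe_eq (r := r) ⟨le_rfl, by omega, h.2⟩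
    rw [← ha, projXZero, constr_mm, if_pos (by omega), ha]
  · rw [mm_eq_zero_of_not (by omega), map_zero]

lemma projXZero_mm_of_ne_zero {i : ℤ} (j : ℤ) (hi : i ≠ 0) : projXZero (mm F r q i j) = 0 := by
  by_cases h : 0 ≤ i ∧ i < r ∧ 0 ≤ j ∧ j < q
  · obtain ⟨a, rfl, rfl⟩ := exists_coe_eq h
    rw [projXZero, constr_mm, if_neg (by omega)]
  · rw [mm_eq_zero_of_not h, map_zero]

lemma divPowMul_mm_comm (i j k l : ℤ) :
    divPowMul (mm F r q i j) (mm F r q k l) = divPowMul (mm F r q k l) (mm F r q i j) := by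
  rw [divPowMul_mm, divPowMul_mm, intChoose_add_comm k, intChoose_add_comm l, add_comm k,
    add_comm l]

lemma divPowMul_mm_assoc (i j k l s t : ℤ) :
    divPowMul (divPowMul (mm F r q i j) (mm F r q k l)) (mm F r q s t)
      = divPowMul (mm F r q i j) (divPowMul (mm F r q k l) (mm F r q s t)) := by
  simp only [divPowMul_mm, map_smul, LinearMap.smul_apply, smul_smul, ← add_assoc,
    ← Int.cast_mul]
  congr 2
  linear_combination
    intChoose (j + l) j * intChoose (j + l + t) (j + l) * intChoose_mul_intChoose i k s +
      intChoose (k + s) k * intChoose (i + k + s) i * intChoose_mul_intChoose j l t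

lemma divPowMul_mm_zero_zero_mm (k l : ℤ) :
    divPowMul (mm F r q 0 0) (mm F r q k l) = mm F r q k l := by
  by_cases h : 0 ≤ k ∧ 0 ≤ l
  · rw [divPowMul_mm, zero_add, zero_add, intChoose_zero_right h.1, intChoose_zero_right h.2,
      mul_one, Int.cast_one, one_smul]
  · simp (disch := omega) only [mm_eq_zero_of_not, map_zero]

theorem divPowMul_comm (u v : Hsp F r q) : divPowMul u v = divPowMul v u := by
  have h : (divPowMul : Hsp F r q →ₗ[F] _) = divPowMul.flip :=
    ext_mm₂ fun _ _ => divPowMul_mm_comm ..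
  exact LinearMap.congr_fun₂ h u v

theorem divPowMul_assoc (u v w : Hsp F r q) :
    divPowMul (divPowMul u v) w = divPowMul u (divPowMul v w) := by
  have h : (divPowMul (F := F) (r := r) (q := q)).compr₂ divPowMul
      = (LinearMap.llcomp F (Hsp F r q) _ _).compl₁₂ divPowMul divPowMul :=
    ext_mm₂ fun _ _ => ext_mm fun _ => divPowMul_mm_assoc ..
  exact LinearMap.congr_fun (LinearMap.congr_fun₂ h u v) w

theorem divPowMul_mm_zero_zero (u : Hsp F r q) : divPowMul (mm F r q 0 0) u = u :=
  LinearMap.congr_fun (g := LinearMap.id) (ext_mm fun _ => divPowMul_mm_zero_zero_mm ..) u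

lemma leibniz_mm_fst (i j k l : ℤ) :
    divPowMul (mm F r q (i - 1) j) (mm F r q k l) + divPowMul (mm F r q i j) (mm F r q (k - 1) l)
      = ((intChoose (i + k) i * intChoose (j + l) j : ℤ) : F) • mm F r q (i + k - 1) (j + l) := by
  rw [divPowMul_mm, divPowMul_mm, show i - 1 + k = i + k - 1 by ring,
    show i + (k - 1) = i + k - 1 by ring, ← add_smul, ← Int.cast_add, ← add_mul]
  by_cases hik : i + k = 0
  · simp (disch := omega) only [mm_eq_zero_of_not, smul_zero]
  · rw [← intChoose_eq_add_of_ne_zero _ hik]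

lemma leibniz_mm_snd (i j k l : ℤ) :
    divPowMul (mm F r q i (j - 1)) (mm F r q k l) + divPowMul (mm F r q i j) (mm F r q k (l - 1))
      = ((intChoose (i + k) i * intChoose (j + l) j : ℤ) : F) • mm F r q (i + k) (j + l - 1) := by
  rw [divPowMul_mm, divPowMul_mm, show j - 1 + l = j + l - 1 by ring,
    show j + (l - 1) = j + l - 1 by ring, ← add_smul, ← Int.cast_add, ← mul_add]
  by_cases hjl : j + l = 0
  · simp (disch := omega) only [mm_eq_zero_of_not, smul_zero]
  · rw [← intChoose_eq_add_of_ne_zero _ hjl]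

lemma derivY_divPowMul_mm_eq_smul (hq : ChooseVanishes F q) (i k : ℤ) {j l : ℤ} (hjq : j < q)
    (hlq : l < q) :
    derivY (divPowMul (mm F r q i j) (mm F r q k l))
      = ((intChoose (i + k) i * intChoose (j + l) j : ℤ) : F) • mm F r q (i + k) (j + l - 1) := by
  rw [divPowMul_mm, map_smul]
  rcases lt_trichotomy (j + l) q with h | h | h
  · rw [derivY_mm h]
  · rw [h, Int.cast_mul, hq.intChoose_eq_zero (by omega : 0 < j) (by omega), mul_zero,
      zero_smul, zero_smul]
  · simp (disch := omega) only [mm_eq_zero_of_not, map_zero, smul_zero]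

lemma twistedDerivX_divPowMul_mm_eq_smul (hr : ChooseVanishes F r) {i k : ℤ} (j l : ℤ) (hir : i < r)
    (hkr : k < r) (hik : i + k ≠ 0) :
    twistedDerivX (divPowMul (mm F r q i j) (mm F r q k l))
      = ((intChoose (i + k) i * intChoose (j + l) j : ℤ) : F) • mm F r q (i + k - 1) (j + l) := by
  rw [divPowMul_mm, map_smul]
  rcases lt_trichotomy (i + k) r with h | h | h
  · rw [twistedDerivX_mm_of_ne_zero _ hik h]
  · rw [h, Int.cast_mul, hr.intChoose_eq_zero (by omega : 0 < i) (by omega), zero_mul,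
      zero_smul, zero_smul]
  · simp (disch := omega) only [mm_eq_zero_of_not, map_zero, smul_zero]

/-- `x^(r-1)` kills monomials of positive `x`-degree, so there the twist of `twistedDerivX` is
invisible. -/
lemma divPowMul_twistedDerivX_mm {i k : ℤ} (j l : ℤ) (hi : 0 ≤ i) (hk : 0 ≤ k) (hkr : k < r)
    (hik : i + k ≠ 0) :
    divPowMul (mm F r q i j) (twistedDerivX (mm F r q k l))
      = divPowMul (mm F r q i j) (mm F r q (k - 1) l) := by
  rcases eq_or_ne k 0 with rfl | hk0
  · rw [twistedDerivX_mm_zero, divPowMul_mm]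
    simp (disch := omega) only [mm_eq_zero_of_not, smul_zero, map_zero]
  · rw [twistedDerivX_mm_of_ne_zero _ hk0 hkr]

lemma twistedDerivX_divPowMul_mm (hr : ChooseVanishes F r) {i j k l : ℤ} (hi : 0 ≤ i)
    (hir : i < r) (hj : 0 ≤ j) (hk : 0 ≤ k) (hkr : k < r) (hl : 0 ≤ l) :
    twistedDerivX (divPowMul (mm F r q i j) (mm F r q k l))
      = divPowMul (twistedDerivX (mm F r q i j)) (mm F r q k l)
        + divPowMul (mm F r q i j) (twistedDerivX (mm F r q k l))
        - divPowMul xTop (divPowMul (projXZero (mm F r q i j)) (projXZero (mm F r q k l))) := by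
  by_cases hik : i + k = 0
  · obtain ⟨rfl, rfl⟩ : i = 0 ∧ k = 0 := by omega
    simp (disch := omega) only [xTop, divPowMul_mm, twistedDerivX_mm_zero, projXZero_mm_zero,
      map_smul, zero_add, add_zero, intChoose_zero_right, intChoose_self]
    module
  have hP : divPowMul (projXZero (mm F r q i j)) (projXZero (mm F r q k l)) = 0 := by
    rcases eq_or_ne i 0 with rfl | hi0
    · rw [projXZero_mm_of_ne_zero l (by omega), map_zero]
    · rw [projXZero_mm_of_ne_zero j hi0, map_zero, LinearMap.zero_apply]
  rw [twistedDerivX_divPowMul_mm_eq_smul hr j l hir hkr hik, hP, map_zero, sub_zero,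
    divPowMul_comm (twistedDerivX _), divPowMul_twistedDerivX_mm l j hk hi hir (by omega),
    divPowMul_mm_comm k, divPowMul_twistedDerivX_mm j l hi hk hkr hik, ← leibniz_mm_fst]

lemma derivY_twistedDerivX_mm {i j : ℤ} (hir : i < r) (hjq : j < q) :
    derivY (twistedDerivX (mm F r q i j)) = twistedDerivX (derivY (mm F r q i j)) := by
  rw [derivY_mm hjq]
  rcases eq_or_ne i 0 with rfl | hi
  · rw [twistedDerivX_mm_zero, twistedDerivX_mm_zero, derivY_mm hjq]
  · rw [twistedDerivX_mm_of_ne_zero _ hi hir, twistedDerivX_mm_of_ne_zero _ hi hir, derivY_mm hjq]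

lemma projXZero_divPowMul_mm {i k : ℤ} (j l : ℤ) (hi : 0 ≤ i) (hk : 0 ≤ k) :
    projXZero (divPowMul (mm F r q i j) (mm F r q k l))
      = divPowMul (projXZero (mm F r q i j)) (projXZero (mm F r q k l)) := by
  rw [divPowMul_mm, map_smul]
  rcases eq_or_ne i 0 with rfl | hi0
  · rcases eq_or_ne k 0 with rfl | hk0
    · rw [zero_add, projXZero_mm_zero, projXZero_mm_zero, projXZero_mm_zero, divPowMul_mm,
        zero_add]
    · rw [projXZero_mm_of_ne_zero _ (by omega), projXZero_mm_of_ne_zero _ hk0, map_zero,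
        smul_zero]
  · rw [projXZero_mm_of_ne_zero _ (by omega), projXZero_mm_of_ne_zero _ hi0, map_zero,
      LinearMap.zero_apply, smul_zero]

lemma xTop_divPowMul_mm {i : ℤ} (j : ℤ) (hi : 0 ≤ i) :
    divPowMul xTop (mm F r q i j) = divPowMul xTop (projXZero (mm F r q i j)) := by
  rcases eq_or_ne i 0 with rfl | hi0
  · rw [projXZero_mm_zero]
  · rw [projXZero_mm_of_ne_zero _ hi0, map_zero, xTop, divPowMul_mm]
    simp (disch := omega) only [mm_eq_zero_of_not, smul_zero]

lemma projXZero_derivY_mm (i : ℤ) {j : ℤ} (hjq : j < q) :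
    projXZero (derivY (mm F r q i j)) = derivY (projXZero (mm F r q i j)) := by
  rw [derivY_mm hjq]
  rcases eq_or_ne i 0 with rfl | hi0
  · rw [projXZero_mm_zero, projXZero_mm_zero, derivY_mm hjq]
  · rw [projXZero_mm_of_ne_zero _ hi0, projXZero_mm_of_ne_zero _ hi0, map_zero]

lemma projXZero_projXZero_mm (i j : ℤ) :
    projXZero (projXZero (mm F r q i j)) = projXZero (mm F r q i j) := by
  rcases eq_or_ne i 0 with rfl | hi0
  · rw [projXZero_mm_zero, projXZero_mm_zero]
  · rw [projXZero_mm_of_ne_zero _ hi0, map_zero]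

theorem derivY_divPowMul (hq : ChooseVanishes F q) (u v : Hsp F r q) :
    derivY (divPowMul u v) = divPowMul (derivY u) v + divPowMul u (derivY v) := by
  have h : (divPowMul (F := F) (r := r) (q := q)).compr₂ derivY
      = divPowMul ∘ₗ derivY + divPowMul.compl₂ derivY :=
    ext_mm₂ fun a b => by
      simp only [LinearMap.compr₂_apply, LinearMap.add_apply, LinearMap.comp_apply,
        LinearMap.compl₂_apply]
      rw [derivY_divPowMul_mm_eq_smul hq _ _ (by omega) (by omega), derivY_mm (by omega),
        derivY_mm (by omega), leibniz_mm_snd]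
  exact LinearMap.congr_fun₂ h u v

theorem twistedDerivX_divPowMul (hr : ChooseVanishes F r) (u v : Hsp F r q) :
    twistedDerivX (divPowMul u v) = divPowMul (twistedDerivX u) v + divPowMul u (twistedDerivX v)
      - divPowMul xTop (divPowMul (projXZero u) (projXZero v)) := by
  have h : (divPowMul (F := F) (r := r) (q := q)).compr₂ twistedDerivX
      = divPowMul ∘ₗ twistedDerivX + divPowMul.compl₂ twistedDerivX
        - ((divPowMul ∘ₗ projXZero).compl₂ projXZero).compr₂ (divPowMul xTop) :=
    ext_mm₂ fun _ _ => by
      exact twistedDerivX_divPowMul_mm hr (by omega) (by omega) (by omega) (by omega)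
        (by omega) (by omega)
  exact LinearMap.congr_fun₂ h u v

theorem derivY_twistedDerivX (u : Hsp F r q) :
    derivY (twistedDerivX u) = twistedDerivX (derivY u) := by
  have h : (derivY (F := F) (r := r) (q := q)) ∘ₗ twistedDerivX = twistedDerivX ∘ₗ derivY :=
    ext_mm fun _ => by exact derivY_twistedDerivX_mm (by omega) (by omega)
  exact LinearMap.congr_fun h u

theorem projXZero_divPowMul (u v : Hsp F r q) :
    projXZero (divPowMul u v) = divPowMul (projXZero u) (projXZero v) := by
  have h : (divPowMul (F := F) (r := r) (q := q)).compr₂ projXZero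
      = (divPowMul ∘ₗ projXZero).compl₂ projXZero :=
    ext_mm₂ fun _ _ => by exact projXZero_divPowMul_mm _ _ (by omega) (by omega)
  exact LinearMap.congr_fun₂ h u v

theorem xTop_divPowMul (u : Hsp F r q) : divPowMul xTop u = divPowMul xTop (projXZero u) := by
  have h : divPowMul (F := F) (r := r) (q := q) xTop = divPowMul xTop ∘ₗ projXZero :=
    ext_mm fun _ => by exact xTop_divPowMul_mm _ (by omega)
  exact LinearMap.congr_fun h u

theorem projXZero_derivY (u : Hsp F r q) : projXZero (derivY u) = derivY (projXZero u) := by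
  have h : (projXZero (F := F) (r := r) (q := q)) ∘ₗ derivY = derivY ∘ₗ projXZero :=
    ext_mm fun _ => by exact projXZero_derivY_mm _ (by omega)
  exact LinearMap.congr_fun h u

theorem projXZero_projXZero (u : Hsp F r q) : projXZero (projXZero u) = projXZero u := by
  have h : (projXZero (F := F) (r := r) (q := q)) ∘ₗ projXZero = projXZero :=
    ext_mm fun _ => projXZero_projXZero_mm ..
  exact LinearMap.congr_fun h u

/-- `Hsp F r q` already carries the pointwise product; the divided power product lives on this
synonym. -/
def DivPow (F : Type*) [Field F] (r q : ℕ) : Type _ := Hsp F r q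

instance : AddCommGroup (DivPow F r q) := inferInstanceAs (AddCommGroup (Hsp F r q))

noncomputable instance : CommRing (DivPow F r q) :=
  { (inferInstance : AddCommGroup (DivPow F r q)) with
    mul := fun u v => divPowMul u v
    one := mm F r q 0 0
    left_distrib := fun u v w => map_add (divPowMul u) v w
    right_distrib := fun u v w => LinearMap.map_add₂ divPowMul u v w
    zero_mul := fun u => LinearMap.map_zero₂ divPowMul u
    mul_zero := fun u => map_zero (divPowMul u)
    mul_assoc := divPowMul_assoc
    one_mul := divPowMul_mm_zero_zero
    mul_one := fun u => (divPowMul_comm u _).trans (divPowMul_mm_zero_zero u)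
    mul_comm := divPowMul_comm }

lemma Ncoef_smul_mm (i j k l : ℤ) :
    (Ncoef i j k l : F) • mm F r q (i + k - 1) (j + l - 1)
      = divPowMul (mm F r q i (j - 1)) (mm F r q (k - 1) l)
        - divPowMul (mm F r q (i - 1) j) (mm F r q k (l - 1)) := by
  rw [divPowMul_mm, divPowMul_mm, Ncoef, show i + (k - 1) = i + k - 1 by ring,
    show j - 1 + l = j + l - 1 by ring, show i - 1 + k = i + k - 1 by ring,
    show j + (l - 1) = j + l - 1 by ring, ← sub_smul, ← Int.cast_sub]

lemma bB_eq_divPowMul (a b : Fin r × Fin q) :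
    bB F r q a b
      = divPowMul (derivY (mm F r q a.1 a.2)) (twistedDerivX (mm F r q b.1 b.2))
        - divPowMul (twistedDerivX (mm F r q a.1 a.2)) (derivY (mm F r q b.1 b.2)) := by
  rw [bB, derivY_mm (by omega), derivY_mm (by omega)]
  split_ifs with h
  · rw [divPowMul_twistedDerivX_mm _ _ (by omega) (by omega) (by omega) (by omega),
      divPowMul_comm (twistedDerivX _),
      divPowMul_twistedDerivX_mm _ _ (by omega) (by omega) (by omega) (by omega),
      divPowMul_mm_comm (b.1 : ℤ), Ncoef_smul_mm]
  · obtain ⟨ha, hb⟩ : (a.1 : ℤ) = 0 ∧ (b.1 : ℤ) = 0 := by omega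
    rw [ha, hb, twistedDerivX_mm_zero, twistedDerivX_mm_zero, divPowMul_mm, divPowMul_mm,
      zero_add, add_zero, show (a.2 : ℤ) - 1 + b.2 = a.2 + b.2 - 1 by ring,
      show (a.2 : ℤ) + (b.2 - 1) = a.2 + b.2 - 1 by ring, intChoose_zero_right (by omega),
      intChoose_self (by omega), ← intChoose_sub _ (b.2 : ℤ),
      show (a.2 : ℤ) + b.2 - 1 - b.2 = a.2 - 1 by ring, one_mul, one_mul, ← sub_smul,
      ← Int.cast_sub]

theorem br_eq_divPowMul (u v : Hsp F r q) :
    br F r q u v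
      = divPowMul (derivY u) (twistedDerivX v) - divPowMul (twistedDerivX u) (derivY v) := by
  let B := (Pi.basisFun F (Fin r × Fin q)).constr F fun a =>
    (Pi.basisFun F (Fin r × Fin q)).constr F (bB F r q a)
  have hB : B = (divPowMul ∘ₗ derivY).compl₂ twistedDerivX
      - (divPowMul ∘ₗ twistedDerivX).compl₂ derivY :=
    ext_mm₂ fun a b => by rw [constr_mm, constr_mm]; exact bB_eq_divPowMul a b
  calc br F r q u v = B u v := by
        simp [B, br, Module.Basis.constr_apply_fintype, Finset.smul_sum, smul_smul]
    _ = _ := LinearMap.congr_fun₂ hB u v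

theorem br_jacobi (hr : ChooseVanishes F r) (hq : ChooseVanishes F q) (u v w : Hsp F r q) :
    br F r q (br F r q u v) w + br F r q (br F r q v w) u + br F r q (br F r q w u) v = 0 := by
  simp only [br_eq_divPowMul]
  exact poissonBracket_jacobi (A := DivPow F r q) derivY.toAddMonoidHom
    twistedDerivX.toAddMonoidHom projXZero xTop (derivY_divPowMul hq) (twistedDerivX_divPowMul hr)
    derivY_twistedDerivX projXZero_divPowMul xTop_divPowMul projXZero_derivY projXZero_projXZero
    u v w

end AlbertZassenhaus

theorem stmt11_general (p : ℕ) (hp : p.Prime) (F : Type*) [Field F] [CharP F p]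
    (n1 n2 : ℕ) :
    (∀ u : Hsp F (p ^ n1) (p ^ n2), br F (p ^ n1) (p ^ n2) u u = 0) ∧
    (∀ u v w : Hsp F (p ^ n1) (p ^ n2),
      br F (p ^ n1) (p ^ n2) (br F (p ^ n1) (p ^ n2) u v) w +
        br F (p ^ n1) (p ^ n2) (br F (p ^ n1) (p ^ n2) v w) u +
        br F (p ^ n1) (p ^ n2) (br F (p ^ n1) (p ^ n2) w u) v = 0) ∧
    Module.finrank F (Hsp F (p ^ n1) (p ^ n2)) = p ^ (n1 + n2) := by
  refine ⟨fun u => ?_, AlbertZassenhaus.br_jacobi (chooseVanishes_prime_pow hp n1)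
    (chooseVanishes_prime_pow hp n2), ?_⟩
  · rw [AlbertZassenhaus.br_eq_divPowMul, AlbertZassenhaus.divPowMul_comm, sub_self]
  · rw [Module.finrank_fintype_fun_eq_card, Fintype.card_prod, Fintype.card_fin,
      Fintype.card_fin, pow_add]

/-- the bracket of `H(2;(n1,n2);Φ(1))` is alternating and satisfies the
Jacobi identity, so `H` is a Lie algebra over `F`, of dimension `p^(n1+n2)`. -/
theorem stmt11 (p : ℕ) (hp : p.Prime) (F : Type*) [Field F] [CharP F p]
    (n1 n2 : ℕ) (hn1 : 0 < n1) (hn2 : 0 < n2) :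
    (∀ u : Hsp F (p ^ n1) (p ^ n2), br F (p ^ n1) (p ^ n2) u u = 0) ∧
    (∀ u v w : Hsp F (p ^ n1) (p ^ n2),
      br F (p ^ n1) (p ^ n2) (br F (p ^ n1) (p ^ n2) u v) w +
        br F (p ^ n1) (p ^ n2) (br F (p ^ n1) (p ^ n2) v w) u +
        br F (p ^ n1) (p ^ n2) (br F (p ^ n1) (p ^ n2) w u) v = 0) ∧
    Module.finrank F (Hsp F (p ^ n1) (p ^ n2)) = p ^ (n1 + n2) :=
  stmt11_general p hp F n1 n2
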